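/- For 0 < q < p ≤ 1, natural number n, and x ∈ [0,1], the (p,q)-Meyer-König and Zeller operator reproduces linear functions: M_{n,p,q}(t; x) = x, i.e., p^{-n(n+1)/2} Σ_{k=0}^{∞} [n+k choose k]_{p,q} x^k p^{-kn} ∏_{s=0}^{n}(p^s - q^s x) · (p^n [k]_{p,q} / [n+k]_{p,q}) = x for x ∈ [0,1). -/

import Mathlib

open Filter Topology

noncomputable def pqInt (p q : ℝ) (n : ℕ) : ℝ := (p ^ n - q ^ n) / (p - q)

noncomputable def pqFact (p q : ℝ) (n : ℕ) : ℝ :=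
  ∏ j ∈ Finset.range n, pqInt p q (j + 1)

noncomputable def pqBinom (p q : ℝ) (n k : ℕ) : ℝ :=
  pqFact p q n / (pqFact p q k * pqFact p q (n - k))

noncomputable def mkz (p q : ℝ) (n : ℕ) (f : ℝ → ℝ) (x : ℝ) : ℝ :=
  if x = 1 then f 1 else
    (p ^ (n * (n + 1) / 2))⁻¹ *
      ∑' k : ℕ, pqBinom p q (n + k) k * x ^ k * (p ^ (k * n))⁻¹ *
        (∏ s ∈ Finset.range (n + 1), (p ^ s - q ^ s * x)) *
        f (p ^ n * pqInt p q k / pqInt p q (n + k))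

noncomputable def supNorm (g : ℝ → ℝ) : ℝ :=
  sSup ((fun x => |g x|) '' Set.Icc (0 : ℝ) 1)

noncomputable def modCont (f : ℝ → ℝ) (δ : ℝ) : ℝ :=
  sSup ((fun p : ℝ × ℝ => |f p.1 - f p.2|) ''
    {p : ℝ × ℝ | p.1 ∈ Set.Icc (0 : ℝ) 1 ∧ p.2 ∈ Set.Icc (0 : ℝ) 1 ∧ |p.1 - p.2| ≤ δ})

def StatLim (x : ℕ → ℝ) (L : ℝ) : Prop :=
  ∀ ε > 0, Filter.Tendsto
    (fun n => (((Finset.range (n + 1)).filter (fun k => ε ≤ |x k - L|)).card : ℝ) / (n : ℝ))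
    Filter.atTop (nhds 0)

/-!
Put `w k = [n + k choose k] x ^ k p ^ (-k n)`. The shift identity
`[n + k + 1 choose k + 1] [k + 1] = [n + k choose k] [n + k + 1]` turns
`w (k + 1) * p ^ n [k + 1] / [n + k + 1]` into `x * w k`, so the operator applied to `t` is `x`
times the operator applied to `1`, and it remains to see that constants are reproduced:
`∑ w k = p ^ (n (n + 1) / 2) / ∏ s ≤ n, (p ^ s - q ^ s x)`. For `n = 0` this is the geometric
series. The `(p,q)`-Pascal rule gives `w' (k + 1) = w (k + 1) + c * w' k` for the weights `w'` of
`n + 1` and `c = q ^ (n + 1) x / p ^ (n + 1)`, so the sum for `n + 1` is the sum for `n` divided by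
`1 - c`. Convergence follows from the ratio test, since `w (k + 1) / w k → x`.
-/

open Finset

section

variable {p q : ℝ}

lemma pqInt_zero : pqInt p q 0 = 0 := by
  simp [pqInt]

lemma pqInt_pos (hq : 0 ≤ q) (hqp : q < p) {m : ℕ} (hm : m ≠ 0) : 0 < pqInt p q m :=
  div_pos (sub_pos.mpr (pow_lt_pow_left₀ hqp hq hm)) (sub_pos.mpr hqp)

lemma pqInt_add (hqp : q < p) (a b : ℕ) :
    pqInt p q (a + b) = p ^ a * pqInt p q b + q ^ b * pqInt p q a := by
  have : p - q ≠ 0 := sub_ne_zero.mpr hqp.ne'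
  simp only [pqInt, pow_add]
  field_simp
  ring

lemma pqInt_div_pqInt (hq : 0 ≤ q) (hqp : q < p) (n k : ℕ) :
    pqInt p q (n + k + 1) / (p ^ n * pqInt p q (k + 1)) =
      (1 - (q / p) ^ (k + (n + 1))) / (1 - (q / p) ^ (k + 1)) := by
  have hp : 0 < p := hq.trans_lt hqp
  have hpq : p - q ≠ 0 := sub_ne_zero.mpr hqp.ne'
  have hk : p ^ (k + 1) - q ^ (k + 1) ≠ 0 :=
    (sub_pos.mpr (pow_lt_pow_left₀ hqp hq k.succ_ne_zero)).ne'
  rw [div_pow, div_pow, one_sub_div (by positivity), one_sub_div (by positivity),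
    div_div_div_eq, div_eq_div_iff (by simp [pqInt, hk, hpq, hp.ne']) (by positivity)]
  simp only [pqInt]
  field_simp
  ring

lemma tendsto_pqInt_div_pqInt (hq : 0 ≤ q) (hqp : q < p) (n : ℕ) :
    Tendsto (fun k : ℕ => pqInt p q (n + k + 1) / (p ^ n * pqInt p q (k + 1))) atTop (𝓝 1) := by
  have hp : 0 < p := hq.trans_lt hqp
  have hpow : ∀ j, Tendsto (fun k : ℕ => (q / p) ^ (k + j)) atTop (𝓝 0) := fun j =>
    (tendsto_pow_atTop_nhds_zero_of_lt_one (div_nonneg hq hp.le) ((div_lt_one hp).mpr hqp)).comp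
      (tendsto_add_atTop_nat j)
  simp_rw [pqInt_div_pqInt hq hqp]
  have h := ((tendsto_const_nhds (x := (1 : ℝ))).sub (hpow (n + 1))).div
    ((tendsto_const_nhds (x := (1 : ℝ))).sub (hpow 1)) (by norm_num)
  rwa [sub_zero, div_one] at h

lemma pqFact_zero : pqFact p q 0 = 1 := by
  simp [pqFact]

lemma pqFact_succ (m : ℕ) : pqFact p q (m + 1) = pqFact p q m * pqInt p q (m + 1) :=
  prod_range_succ _ _

lemma pqFact_pos (hq : 0 ≤ q) (hqp : q < p) (m : ℕ) : 0 < pqFact p q m :=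
  prod_pos fun j _ => pqInt_pos hq hqp j.succ_ne_zero

lemma pqBinom_add_right (a b : ℕ) :
    pqBinom p q (a + b) b = pqFact p q (a + b) / (pqFact p q b * pqFact p q a) := by
  rw [pqBinom, Nat.add_sub_cancel]

lemma pqBinom_zero_right (hq : 0 ≤ q) (hqp : q < p) (a : ℕ) : pqBinom p q a 0 = 1 := by
  rw [← add_zero a, pqBinom_add_right, pqFact_zero, one_mul, add_zero,
    div_self (pqFact_pos hq hqp _).ne']

lemma pqBinom_pos (hq : 0 ≤ q) (hqp : q < p) (m k : ℕ) : 0 < pqBinom p q m k :=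
  div_pos (pqFact_pos hq hqp _) (mul_pos (pqFact_pos hq hqp _) (pqFact_pos hq hqp _))

lemma pqBinom_succ_mul_pqInt (hq : 0 ≤ q) (hqp : q < p) (n k : ℕ) :
    pqBinom p q (n + (k + 1)) (k + 1) * pqInt p q (k + 1) =
      pqBinom p q (n + k) k * pqInt p q (n + k + 1) := by
  have := pqFact_pos hq hqp k
  have := pqFact_pos hq hqp n
  have := pqInt_pos hq hqp k.succ_ne_zero
  rw [pqBinom_add_right, pqBinom_add_right, ← add_assoc, pqFact_succ, pqFact_succ]
  field_simp

lemma pqBinom_pascal (hq : 0 ≤ q) (hqp : q < p) (m k : ℕ) :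
    pqBinom p q ((m + 1) + (k + 1)) (k + 1) =
      p ^ (k + 1) * pqBinom p q (m + (k + 1)) (k + 1) +
        q ^ (m + 1) * pqBinom p q ((m + 1) + k) k := by
  have := pqFact_pos hq hqp k
  have := pqFact_pos hq hqp m
  have := pqInt_pos hq hqp k.succ_ne_zero
  have := pqInt_pos hq hqp m.succ_ne_zero
  have hsplit := pqInt_add (p := p) hqp (k + 1) (m + 1)
  rw [pqBinom_add_right, pqBinom_add_right, pqBinom_add_right,
    show (m + 1) + (k + 1) = (m + (k + 1)) + 1 by omega, show (m + 1) + k = m + (k + 1) by omega,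
    pqFact_succ (m + (k + 1)),
    show m + (k + 1) + 1 = (k + 1) + (m + 1) by omega, hsplit, pqFact_succ k, pqFact_succ m]
  field_simp

end

lemma tsum_eq_tsum_add_mul_tsum_of_succ {f u : ℕ → ℝ} {c : ℝ} (hf : Summable f)
    (hu : Summable u) (h0 : f 0 = u 0) (hsucc : ∀ k, f (k + 1) = u (k + 1) + c * f k) :
    ∑' k, f k = ∑' k, u k + c * ∑' k, f k := calc
  ∑' k, f k = f 0 + ∑' k, f (k + 1) := hf.tsum_eq_zero_add
  _ = u 0 + ∑' k, u (k + 1) + c * ∑' k, f k := by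
    rw [tsum_congr hsucc, ((summable_nat_add_iff 1).mpr hu).tsum_add (hf.mul_left c),
      tsum_mul_left, h0, add_assoc]
  _ = ∑' k, u k + c * ∑' k, f k := by rw [← hu.tsum_eq_zero_add]

noncomputable def mkzWeight (p q : ℝ) (n : ℕ) (x : ℝ) (k : ℕ) : ℝ :=
  pqBinom p q (n + k) k * x ^ k * (p ^ (k * n))⁻¹

section

variable {p q x : ℝ}

lemma mkz_of_ne_one (f : ℝ → ℝ) (n : ℕ) (hx : x ≠ 1) :
    mkz p q n f x = (p ^ (n * (n + 1) / 2))⁻¹ *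
      ∑' k, mkzWeight p q n x k * (∏ s ∈ range (n + 1), (p ^ s - q ^ s * x)) *
        f (p ^ n * pqInt p q k / pqInt p q (n + k)) := by
  rw [mkz, if_neg hx]
  rfl

lemma mkzWeight_nonneg (hq : 0 ≤ q) (hqp : q < p) (hx : 0 ≤ x) (n k : ℕ) :
    0 ≤ mkzWeight p q n x k := by
  have := pqBinom_pos hq hqp (n + k) k
  have : 0 < p := hq.trans_lt hqp
  unfold mkzWeight
  positivity

lemma mkzWeight_zero_right (hq : 0 ≤ q) (hqp : q < p) (n : ℕ) : mkzWeight p q n x 0 = 1 := by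
  simp [mkzWeight, pqBinom_zero_right hq hqp]

lemma mkzWeight_zero_left (hq : 0 ≤ q) (hqp : q < p) (k : ℕ) : mkzWeight p q 0 x k = x ^ k := by
  have hB := pqBinom_add_right (p := p) (q := q) 0 k
  rw [zero_add, pqFact_zero, mul_one, div_self (pqFact_pos hq hqp k).ne'] at hB
  simp [mkzWeight, hB]

lemma mkzWeight_succ (hq : 0 ≤ q) (hqp : q < p) (n k : ℕ) :
    mkzWeight p q n x (k + 1) =
      mkzWeight p q n x k * (x * (pqInt p q (n + k + 1) / (p ^ n * pqInt p q (k + 1)))) := by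
  have := pqInt_pos hq hqp k.succ_ne_zero
  have : 0 < p := hq.trans_lt hqp
  have hB : pqBinom p q (n + (k + 1)) (k + 1) =
      pqBinom p q (n + k) k * pqInt p q (n + k + 1) / pqInt p q (k + 1) := by
    rw [← pqBinom_succ_mul_pqInt hq hqp]
    field_simp
  rw [mkzWeight, mkzWeight, hB, add_mul, one_mul, pow_add]
  field_simp
  ring

lemma mkzWeight_succ_mul_node (hq : 0 ≤ q) (hqp : q < p) (n k : ℕ) :
    mkzWeight p q n x (k + 1) * (p ^ n * pqInt p q (k + 1) / pqInt p q (n + (k + 1))) =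
      x * mkzWeight p q n x k := by
  have := pqInt_pos hq hqp k.succ_ne_zero
  have := pqInt_pos hq hqp (n + k).succ_ne_zero
  have : 0 < p := hq.trans_lt hqp
  rw [mkzWeight_succ hq hqp, ← add_assoc]
  field_simp

lemma mkzWeight_pascal (hq : 0 ≤ q) (hqp : q < p) (m k : ℕ) :
    mkzWeight p q (m + 1) x (k + 1) =
      mkzWeight p q m x (k + 1) + q ^ (m + 1) * x / p ^ (m + 1) * mkzWeight p q (m + 1) x k := by
  have : 0 < p := hq.trans_lt hqp
  rw [mkzWeight, mkzWeight, mkzWeight, pqBinom_pascal hq hqp,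
    show (k + 1) * (m + 1) = (k + 1) * m + (k + 1) by ring,
    show k * (m + 1) = k * m + k by ring]
  field_simp
  ring

lemma summable_mkzWeight (hq : 0 ≤ q) (hqp : q < p) (hx0 : 0 ≤ x) (hx1 : x < 1) (n : ℕ) :
    Summable (mkzWeight p q n x) := by
  have hratio : Tendsto (fun k : ℕ => x * (pqInt p q (n + k + 1) / (p ^ n * pqInt p q (k + 1))))
      atTop (𝓝 x) := by
    simpa using (tendsto_pqInt_div_pqInt hq hqp n).const_mul x
  refine summable_of_ratio_norm_eventually_le (r := (1 + x) / 2) (by linarith) ?_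
  filter_upwards [hratio.eventually (ge_mem_nhds (show x < (1 + x) / 2 by linarith))] with k hk
  rw [Real.norm_of_nonneg (mkzWeight_nonneg hq hqp hx0 n _),
    Real.norm_of_nonneg (mkzWeight_nonneg hq hqp hx0 n _), mkzWeight_succ hq hqp, mul_comm]
  exact mul_le_mul_of_nonneg_right hk (mkzWeight_nonneg hq hqp hx0 n k)

lemma pow_sub_pow_mul_pos (hq : 0 ≤ q) (hqp : q < p) (hx0 : 0 ≤ x) (hx1 : x < 1) (s : ℕ) :
    0 < p ^ s - q ^ s * x := by
  have : 0 < p := hq.trans_lt hqp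
  refine sub_pos.mpr ?_
  calc q ^ s * x ≤ p ^ s * x := mul_le_mul_of_nonneg_right (pow_le_pow_left₀ hq hqp.le s) hx0
    _ < p ^ s := mul_lt_of_lt_one_right (by positivity) hx1

lemma tsum_mkzWeight (hq : 0 ≤ q) (hqp : q < p) (hx0 : 0 ≤ x) (hx1 : x < 1) (n : ℕ) :
    ∑' k, mkzWeight p q n x k =
      p ^ (n * (n + 1) / 2) / ∏ s ∈ range (n + 1), (p ^ s - q ^ s * x) := by
  induction n with
  | zero =>
    simp [mkzWeight_zero_left hq hqp, tsum_geometric_of_lt_one hx0 hx1]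
  | succ m ih =>
    have : 0 < p := hq.trans_lt hqp
    have hd := pow_sub_pow_mul_pos hq hqp hx0 hx1 (m + 1)
    have hP : 0 < ∏ s ∈ range (m + 1), (p ^ s - q ^ s * x) :=
      prod_pos fun s _ => pow_sub_pow_mul_pos hq hqp hx0 hx1 s
    have hrec := tsum_eq_tsum_add_mul_tsum_of_succ (summable_mkzWeight hq hqp hx0 hx1 (m + 1))
      (summable_mkzWeight hq hqp hx0 hx1 m)
      (by rw [mkzWeight_zero_right hq hqp, mkzWeight_zero_right hq hqp])
      (mkzWeight_pascal hq hqp m)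
    have hexp : (m + 1) * (m + 1 + 1) / 2 = m * (m + 1) / 2 + (m + 1) := by
      rw [show (m + 1) * (m + 1 + 1) = m * (m + 1) + (m + 1) * 2 by ring,
        Nat.add_mul_div_right _ _ two_pos]
    rw [ih] at hrec
    rw [prod_range_succ, hexp, pow_add, eq_div_iff (by positivity)]
    field_simp at hrec
    linear_combination hrec

lemma tsum_mkzWeight_mul_node (hq : 0 ≤ q) (hqp : q < p) (hx0 : 0 ≤ x) (hx1 : x < 1) (n : ℕ) :
    ∑' k, mkzWeight p q n x k * (p ^ n * pqInt p q k / pqInt p q (n + k)) =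
      x * ∑' k, mkzWeight p q n x k := by
  rw [tsum_eq_zero_add' ?_, pqInt_zero, mul_zero, zero_div, mul_zero, zero_add]
  · simp_rw [mkzWeight_succ_mul_node hq hqp]
    exact tsum_mul_left
  · simp_rw [mkzWeight_succ_mul_node hq hqp]
    exact (summable_mkzWeight hq hqp hx0 hx1 n).mul_left x

end

theorem mkz_id_general (p q : ℝ) (hq : 0 < q) (hqp : q < p)
    (n : ℕ) (x : ℝ) (hx : x ∈ Set.Icc (0 : ℝ) 1) :
    mkz p q n (fun t => t) x = x := by
  obtain ⟨hx0, hx1⟩ := hx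
  rcases hx1.eq_or_lt with rfl | hx1
  · simp [mkz]
  have hp : 0 < p := hq.trans hqp
  have hP : 0 < ∏ s ∈ range (n + 1), (p ^ s - q ^ s * x) :=
    prod_pos fun s _ => pow_sub_pow_mul_pos hq.le hqp hx0 hx1 s
  rw [mkz_of_ne_one _ _ hx1.ne]
  simp_rw [mul_right_comm (mkzWeight _ _ _ _ _)]
  rw [tsum_mul_right, tsum_mkzWeight_mul_node hq.le hqp hx0 hx1, tsum_mkzWeight hq.le hqp hx0 hx1,
    mul_assoc, div_mul_cancel₀ _ hP.ne', inv_mul_eq_iff_eq_mul₀ (by positivity), mul_comm]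

theorem mkz_id (p q : ℝ) (hq : 0 < q) (hqp : q < p) (hp : p ≤ 1)
    (n : ℕ) (x : ℝ) (hx : x ∈ Set.Icc (0 : ℝ) 1) :
    mkz p q n (fun t => t) x = x :=
  mkz_id_general p q hq hqp n x hx
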